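/- Let d ≥ 1 be an integer and define c_n(z,u) = exp(−i·√n·Im(u·z)) for z, u ∈ ℂ^d (a unimodular number). Then for every z ∈ ℂ^d with |z| < 1 and all u, v ∈ ℂ^d: lim_{n→∞} c_n(z,u)·conj(c_n(z,v))·K_n(√n·z + u, √n·z + v) = π^{−d}·exp( u·v − (|u|² + |v|²)/2 ), and the convergence is uniform on compact subsets of {z ∈ ℂ^d : |z| < 1} × ℂ^d × ℂ^d. (Thus in the bulk the τ = 0 model exhibits the higher dimensional Ginibre kernel as scaling limit, up to unimodular cocycle factors.) -/

import Mathlib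

/-!
Write `a = √n z + u`, `b = √n z + v` and `eₙ(w) = ∑_{m<n} wᵐ/m!`. The multinomial theorem gives
`Kₙ(a, b) = π^{-d} e^{-(|a|² + |b|²)/2} eₙ(a·b)`, and the cocycles cancel the imaginary cross terms
of the Gaussian weight, so the scaled kernel equals the Ginibre kernel times `e^{-w} eₙ(w)` with
`w = a·b = n|z|² + O(√n)`. Comparing the exponential tail termwise with the series of `e^{|w|/θ}`
gives `|e^{-w} eₙ(w) - 1| ≤ θⁿ e^{|w|/θ - Re w} ≤ exp (n (|z|² (θ⁻¹ - 1) + log θ) + O(√n))`, and for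
`|z|² ≤ ρ < θ < 1` the coefficient of `n` is negative. On a compact set all constants are uniform.
-/

open scoped BigOperators Real
open ComplexConjugate Filter

noncomputable def dotC {d : ℕ} (z w : Fin d → ℂ) : ℂ := ∑ k, z k * conj (w k)

noncomputable def normSqC {d : ℕ} (z : Fin d → ℂ) : ℝ := ∑ k, Complex.normSq (z k)

def multiIdx (d n : ℕ) : Finset (Fin d → ℕ) :=
  (Fintype.piFinset fun _ : Fin d => Finset.range n).filter fun j => (∑ k, j k) < n

/-- The higher dimensional Ginibre-type kernel at `τ = 0`. -/
noncomputable def K0 (d n : ℕ) (z w : Fin d → ℂ) : ℂ :=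
  ((Real.pi : ℂ))⁻¹ ^ d * Complex.exp (-(((normSqC z + normSqC w : ℝ)) : ℂ) / 2) *
    ∑ j ∈ multiIdx d n, ∏ k, (z k * conj (w k)) ^ (j k) / (Nat.factorial (j k) : ℂ)

/-- The unimodular cocycle `c_n(z,u) = exp(-i √n Im(u·z))` for the `τ = 0` model. -/
noncomputable def cUni0 (d : ℕ) (n : ℕ) (z u : Fin d → ℂ) : ℂ :=
  Complex.exp (-(Complex.I * ((Real.sqrt n : ℝ) : ℂ) * (((dotC u z).im : ℝ) : ℂ)))

open Finset
open scoped Nat Topology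

section DotC

variable {d : ℕ}

theorem normSqC_nonneg (x : Fin d → ℂ) : 0 ≤ normSqC x :=
  Finset.sum_nonneg fun _ _ ↦ Complex.normSq_nonneg _

theorem continuous_normSqC : Continuous (normSqC : (Fin d → ℂ) → ℝ) := by
  unfold normSqC; fun_prop

theorem ofReal_normSqC (x : Fin d → ℂ) : (normSqC x : ℂ) = dotC x x := by
  simp [normSqC, dotC, Complex.mul_conj]

theorem conj_dotC (x y : Fin d → ℂ) : conj (dotC x y) = dotC y x := by
  simp [dotC, mul_comm]

theorem two_mul_re_dotC_le (x y : Fin d → ℂ) : 2 * (dotC x y).re ≤ normSqC x + normSqC y := by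
  simp only [dotC, normSqC, Complex.re_sum, Finset.mul_sum, ← Finset.sum_add_distrib]
  refine Finset.sum_le_sum fun k _ ↦ ?_
  have := Complex.normSq_nonneg (x k - y k)
  rw [Complex.normSq_sub] at this
  simp only [Complex.mul_re, Complex.conj_re, Complex.conj_im] at this ⊢
  linarith

theorem norm_dotC_le (x y : Fin d → ℂ) : ‖dotC x y‖ ≤ d * (‖x‖ * ‖y‖) := by
  refine (norm_sum_le _ _).trans ?_
  calc ∑ k, ‖x k * conj (y k)‖ ≤ ∑ _k : Fin d, ‖x‖ * ‖y‖ := by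
        refine Finset.sum_le_sum fun k _ ↦ ?_
        rw [norm_mul, Complex.norm_conj]
        exact mul_le_mul (norm_le_pi_norm x k) (norm_le_pi_norm y k) (norm_nonneg _)
          (norm_nonneg _)
    _ = d * (‖x‖ * ‖y‖) := by simp

theorem dotC_shift (S : ℝ) (z u v : Fin d → ℂ) :
    dotC (fun k ↦ (S : ℂ) * z k + u k) (fun k ↦ (S : ℂ) * z k + v k)
      = (S : ℂ) ^ 2 * dotC z z + S * dotC z v + S * dotC u z + dotC u v := by
  simp only [dotC, Finset.mul_sum, ← Finset.sum_add_distrib, map_add, map_mul,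
    Complex.conj_ofReal]
  exact Finset.sum_congr rfl fun k _ ↦ by ring

theorem dotC_sqrt_shift (n : ℕ) (z u v : Fin d → ℂ) :
    dotC (fun k ↦ (√n : ℂ) * z k + u k) (fun k ↦ (√n : ℂ) * z k + v k)
      = ((n * normSqC z : ℝ) : ℂ) + (√n * dotC z v + √n * dotC u z + dotC u v) := by
  rw [dotC_shift, ← Complex.ofReal_pow, Real.sq_sqrt n.cast_nonneg, ← ofReal_normSqC]
  push_cast
  ring

end DotC

theorem multiIdx_eq_biUnion_piAntidiag (d n : ℕ) :
    multiIdx d n = (range n).biUnion fun m ↦ piAntidiag univ m := by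
  ext j
  simp only [multiIdx, mem_filter, Fintype.mem_piFinset, mem_range, mem_biUnion,
    mem_piAntidiag]
  constructor
  · rintro ⟨-, hj⟩
    exact ⟨_, hj, rfl, fun k _ ↦ mem_univ k⟩
  · rintro ⟨m, hm, rfl, -⟩
    exact ⟨fun k ↦ (single_le_sum (fun i _ ↦ Nat.zero_le (j i)) (mem_univ k)).trans_lt hm, hm⟩

/-- The multinomial theorem, summed over all total degrees below `n`. -/
theorem sum_multiIdx_prod_pow_div_factorial {d : ℕ} (n : ℕ) (c : Fin d → ℂ) :
    ∑ j ∈ multiIdx d n, ∏ k, c k ^ j k / ((j k)! : ℂ)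
      = ∑ m ∈ range n, (∑ k, c k) ^ m / (m ! : ℂ) := by
  rw [multiIdx_eq_biUnion_piAntidiag, sum_biUnion]
  · refine sum_congr rfl fun m _ ↦ ?_
    rw [sum_pow_eq_sum_piAntidiag, sum_div]
    refine sum_congr rfl fun j hj ↦ ?_
    have hspec : (∏ k, ((j k)! : ℂ)) * (Nat.multinomial univ j : ℂ) = (m ! : ℂ) := by
      rw [(mem_piAntidiag.1 hj).1.symm]
      exact_mod_cast Nat.multinomial_spec univ j
    have hmult : (Nat.multinomial univ j : ℂ) ≠ 0 :=
      Nat.cast_ne_zero.2 (Nat.multinomial_pos _ _).ne'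
    rw [prod_div_distrib, ← hspec]
    field_simp
  · intro a _ b _ hab
    exact disjoint_left.2 fun j hja hjb ↦ hab <|
      (mem_piAntidiag.1 hja).1.symm.trans (mem_piAntidiag.1 hjb).1

theorem K0_eq (d n : ℕ) (a b : Fin d → ℂ) :
    K0 d n a b = ((π : ℂ))⁻¹ ^ d * Complex.exp (-((normSqC a + normSqC b : ℝ) : ℂ) / 2) *
      ∑ m ∈ range n, dotC a b ^ m / (m ! : ℂ) := by
  rw [K0, sum_multiIdx_prod_pow_div_factorial]
  rfl

noncomputable def ginibreKernel (d : ℕ) (u v : Fin d → ℂ) : ℂ :=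
  ((π : ℂ))⁻¹ ^ d * Complex.exp (dotC u v - ((normSqC u + normSqC v : ℝ) : ℂ) / 2)

theorem norm_ginibreKernel_le {d : ℕ} (u v : Fin d → ℂ) : ‖ginibreKernel d u v‖ ≤ π⁻¹ ^ d := by
  rw [ginibreKernel, norm_mul, norm_pow, norm_inv, Complex.norm_real, Real.norm_of_nonneg
    Real.pi_pos.le, Complex.norm_exp]
  refine mul_le_of_le_one_right (by positivity) (Real.exp_le_one_iff.2 ?_)
  have := two_mul_re_dotC_le u v
  rw [Complex.sub_re, Complex.div_ofNat_re, Complex.ofReal_re]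
  linarith

theorem cUni0_mul_conj_mul_exp (d n : ℕ) (z u v : Fin d → ℂ) :
    cUni0 d n z u * conj (cUni0 d n z v) *
      Complex.exp (-((normSqC (fun k ↦ (√n : ℂ) * z k + u k)
        + normSqC (fun k ↦ (√n : ℂ) * z k + v k) : ℝ) : ℂ) / 2)
    = Complex.exp (dotC u v - ((normSqC u + normSqC v : ℝ) : ℂ) / 2
        - dotC (fun k ↦ (√n : ℂ) * z k + u k) (fun k ↦ (√n : ℂ) * z k + v k)) := by
  rw [cUni0, cUni0, ← Complex.exp_conj, ← Complex.exp_add, ← Complex.exp_add]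
  congr 1
  have hu := Complex.sub_conj (dotC u z)
  have hv := Complex.sub_conj (dotC v z)
  rw [conj_dotC] at hu hv
  push_cast [ofReal_normSqC] at hu hv ⊢
  simp only [dotC_shift, map_neg, map_mul, Complex.conj_I, Complex.conj_ofReal]
  linear_combination (√n / 2 : ℂ) * hu - (√n / 2 : ℂ) * hv

theorem cUni0_mul_conj_mul_K0 (d n : ℕ) (z u v : Fin d → ℂ) :
    cUni0 d n z u * conj (cUni0 d n z v) *
      K0 d n (fun k ↦ (√n : ℂ) * z k + u k) (fun k ↦ (√n : ℂ) * z k + v k)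
    = ginibreKernel d u v *
      (Complex.exp (-dotC (fun k ↦ (√n : ℂ) * z k + u k) (fun k ↦ (√n : ℂ) * z k + v k)) *
        ∑ m ∈ range n, dotC (fun k ↦ (√n : ℂ) * z k + u k)
          (fun k ↦ (√n : ℂ) * z k + v k) ^ m / (m ! : ℂ)) := by
  rw [K0_eq, ginibreKernel, mul_comm ((π : ℂ)⁻¹ ^ d), ← mul_assoc, ← mul_assoc,
    cUni0_mul_conj_mul_exp, sub_eq_add_neg _ (dotC _ _), Complex.exp_add]
  ring

theorem Real.exp_sub_sum_range_le_pow_mul_exp_div {r θ : ℝ} (hr : 0 ≤ r) (hθ : 0 < θ)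
    (hθ1 : θ ≤ 1) (n : ℕ) :
    Real.exp r - ∑ m ∈ range n, r ^ m / m ! ≤ θ ^ n * Real.exp (r / θ) := by
  have tail (x : ℝ) : HasSum (fun k ↦ x ^ (k + n) / (k + n)!)
      (Real.exp x - ∑ m ∈ range n, x ^ m / m !) :=
    (hasSum_nat_add_iff' n).2 (Real.exp_eq_exp_ℝ ▸ NormedSpace.expSeries_div_hasSum_exp x)
  have termwise (k : ℕ) : r ^ (k + n) / (k + n)! ≤ θ ^ n * ((r / θ) ^ (k + n) / (k + n)!) := by
    rw [show r ^ (k + n) = θ ^ (k + n) * (r / θ) ^ (k + n) by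
      rw [← mul_pow, mul_div_cancel₀ _ hθ.ne'], mul_div_assoc]
    exact mul_le_mul_of_nonneg_right (pow_le_pow_of_le_one hθ.le hθ1 (Nat.le_add_left n k))
      (by positivity)
  calc Real.exp r - ∑ m ∈ range n, r ^ m / m !
      ≤ θ ^ n * (Real.exp (r / θ) - ∑ m ∈ range n, (r / θ) ^ m / m !) :=
        hasSum_le termwise (tail r) ((tail (r / θ)).mul_left _)
    _ ≤ θ ^ n * Real.exp (r / θ) := by
        gcongr
        exact sub_le_self _ (sum_nonneg fun m _ ↦ by positivity)

theorem Complex.norm_exp_neg_mul_sum_range_sub_one_le (w : ℂ) {θ : ℝ} (hθ : 0 < θ)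
    (hθ1 : θ ≤ 1) (n : ℕ) :
    ‖Complex.exp (-w) * ∑ m ∈ range n, w ^ m / (m ! : ℂ) - 1‖
      ≤ θ ^ n * Real.exp (‖w‖ / θ - w.re) := by
  have h : Complex.exp (-w) * ∑ m ∈ range n, w ^ m / (m ! : ℂ) - 1
      = -(Complex.exp (-w) * (Complex.exp w - ∑ m ∈ range n, w ^ m / m !)) := by
    rw [mul_sub, ← Complex.exp_add, neg_add_cancel, Complex.exp_zero]
    ring
  rw [h, norm_neg, norm_mul, Complex.norm_exp, Complex.neg_re, Real.exp_sub, mul_comm,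
    ← mul_div_assoc, div_eq_mul_inv, ← Real.exp_neg]
  gcongr
  exact (Complex.norm_exp_sub_sum_le_exp_norm_sub_sum w n).trans
    (Real.exp_sub_sum_range_le_pow_mul_exp_div (norm_nonneg w) hθ hθ1 n)

theorem mul_inv_sub_one_add_log_neg {ρ θ : ℝ} (hρθ : ρ ≤ θ) (hθ0 : 0 < θ) (hθ1 : θ < 1) :
    ρ * (θ⁻¹ - 1) + Real.log θ < 0 := by
  have hlog := Real.log_lt_sub_one_of_pos hθ0 hθ1.ne
  have : ρ * (θ⁻¹ - 1) ≤ 1 - θ := by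
    rw [mul_sub, mul_one, ← div_eq_mul_inv, div_sub' hθ0.ne', div_le_iff₀ hθ0]
    nlinarith
  linarith

theorem tendsto_exp_mul_add_mul_sqrt_add {γ b c : ℝ} (hγ : γ < 0) :
    Tendsto (fun n : ℕ ↦ Real.exp (γ * n + b * √n + c)) atTop (𝓝 0) := by
  have hsqrt : Tendsto (fun n : ℕ ↦ √(n : ℝ)) atTop atTop :=
    Real.tendsto_sqrt_atTop.comp tendsto_natCast_atTop_atTop
  have hlin : Tendsto (fun n : ℕ ↦ √(n : ℝ) * (γ * √n + b) + c) atTop atBot :=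
    tendsto_atBot_add_const_right _ c <| hsqrt.atTop_mul_atBot₀ <|
      tendsto_atBot_add_const_right _ b (hsqrt.const_mul_atTop_of_neg hγ)
  refine Real.tendsto_exp_atBot.comp (hlin.congr fun n ↦ ?_)
  have := Real.mul_self_sqrt (Nat.cast_nonneg (α := ℝ) n)
  linear_combination γ * this

theorem exists_tendsto_zero_bound_exp_neg_mul_sum_range_sub_one {ρ C : ℝ} (hρ0 : 0 ≤ ρ)
    (hρ1 : ρ < 1) :
    ∃ ε : ℕ → ℝ, Tendsto ε atTop (𝓝 0) ∧ ∀ (n : ℕ) (s : ℝ) (t : ℂ), 0 ≤ s → s ≤ ρ →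
      ‖t‖ ≤ C * (√n + 1) →
      ‖Complex.exp (-(((n * s : ℝ) : ℂ) + t)) *
        ∑ m ∈ range n, (((n * s : ℝ) : ℂ) + t) ^ m / (m ! : ℂ) - 1‖ ≤ ε n := by
  set θ := (1 + ρ) / 2 with hθ
  have hθ0 : 0 < θ := by positivity
  have hθ1 : θ < 1 := by linarith
  have hθinv : 1 ≤ θ⁻¹ := one_le_inv_iff₀.2 ⟨hθ0, hθ1.le⟩
  set γ := ρ * (θ⁻¹ - 1) + Real.log θ
  have hγ : γ < 0 := mul_inv_sub_one_add_log_neg (by linarith) hθ0 hθ1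
  set b := C * (θ⁻¹ + 1)
  refine ⟨fun n ↦ Real.exp (γ * n + b * √n + b), tendsto_exp_mul_add_mul_sqrt_add hγ, ?_⟩
  intro n s t hs0 hsρ ht
  set w : ℂ := ((n * s : ℝ) : ℂ) + t
  have hns : 0 ≤ (n : ℝ) * s := by positivity
  have hnorm : ‖w‖ ≤ n * s + ‖t‖ := by
    refine (norm_add_le _ _).trans ?_
    rw [Complex.norm_real, Real.norm_of_nonneg hns]
  have hre : n * s - ‖t‖ ≤ w.re := by
    have := (abs_le.1 (Complex.abs_re_le_norm t)).1
    simp only [w, Complex.add_re, Complex.ofReal_re]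
    linarith
  have hpow : θ ^ n = Real.exp (n * Real.log θ) := by
    rw [Real.exp_nat_mul, Real.exp_log hθ0]
  refine (Complex.norm_exp_neg_mul_sum_range_sub_one_le w hθ0 hθ1.le n).trans ?_
  rw [hpow, ← Real.exp_add]
  refine Real.exp_le_exp.2 ?_
  have h1 : ‖w‖ / θ ≤ (n * s + ‖t‖) * θ⁻¹ := by
    rw [div_eq_mul_inv]; exact mul_le_mul_of_nonneg_right hnorm (by positivity)
  have h2 : n * s * (θ⁻¹ - 1) ≤ n * ρ * (θ⁻¹ - 1) :=
    mul_le_mul_of_nonneg_right (by gcongr) (by linarith)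
  have h3 : ‖t‖ * (θ⁻¹ + 1) ≤ C * (√n + 1) * (θ⁻¹ + 1) :=
    mul_le_mul_of_nonneg_right ht (by positivity)
  simp only [γ, b]
  nlinarith

theorem tendstoUniformlyOn_of_dist_le {ι α β : Type*} [PseudoMetricSpace β] {l : Filter ι}
    {F : ι → α → β} {f : α → β} {s : Set α} {ε : ι → ℝ} (hε : Tendsto ε l (𝓝 0))
    (h : ∀ i, ∀ x ∈ s, dist (f x) (F i x) ≤ ε i) : TendstoUniformlyOn F f l s :=
  Metric.tendstoUniformlyOn_iff.2 fun _ hδ ↦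
    (hε.eventually (gt_mem_nhds hδ)).mono fun i hi x hx ↦ (h i x hx).trans_lt hi

theorem tendstoUniformlyOn_cUni0_mul_conj_mul_K0 (d : ℕ)
    {K : Set ((Fin d → ℂ) × (Fin d → ℂ) × (Fin d → ℂ))} (hK : K ⊆ {p | normSqC p.1 < 1})
    (hKc : IsCompact K) :
    TendstoUniformlyOn
      (fun (n : ℕ) (p : (Fin d → ℂ) × (Fin d → ℂ) × (Fin d → ℂ)) ↦
        cUni0 d n p.1 p.2.1 * conj (cUni0 d n p.1 p.2.2) *
          K0 d n (fun k ↦ (√n : ℂ) * p.1 k + p.2.1 k) (fun k ↦ (√n : ℂ) * p.1 k + p.2.2 k))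
      (fun p ↦ ginibreKernel d p.2.1 p.2.2) atTop K := by
  rcases K.eq_empty_or_nonempty with rfl | hne
  · exact tendstoUniformlyOn_empty
  obtain ⟨p₀, hp₀, hmax⟩ :=
    hKc.exists_isMaxOn hne (continuous_normSqC.comp continuous_fst).continuousOn
  obtain ⟨R, hR⟩ := hKc.isBounded.exists_norm_le
  have hR0 : 0 ≤ R := (norm_nonneg p₀).trans (hR p₀ hp₀)
  obtain ⟨ε, hε, hbound⟩ := exists_tendsto_zero_bound_exp_neg_mul_sum_range_sub_one
    (C := 2 * d * R ^ 2) (normSqC_nonneg p₀.1) (hK hp₀)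
  refine tendstoUniformlyOn_of_dist_le (ε := fun n ↦ π⁻¹ ^ d * ε n)
    (by simpa using hε.const_mul (π⁻¹ ^ d)) fun n ⟨z, u, v⟩ hp ↦ ?_
  have hz : ‖z‖ ≤ R := (norm_fst_le _).trans (hR _ hp)
  have hu : ‖u‖ ≤ R := ((norm_fst_le _).trans (norm_snd_le _)).trans (hR _ hp)
  have hv : ‖v‖ ≤ R := ((norm_snd_le _).trans (norm_snd_le _)).trans (hR _ hp)
  have hdot {x y : Fin d → ℂ} (hx : ‖x‖ ≤ R) (hy : ‖y‖ ≤ R) : ‖dotC x y‖ ≤ d * R ^ 2 :=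
    (norm_dotC_le x y).trans (by rw [sq]; gcongr)
  have hcross : ‖(√n : ℂ) * dotC z v + √n * dotC u z + dotC u v‖ ≤ 2 * d * R ^ 2 * (√n + 1) := by
    calc _ ≤ √n * ‖dotC z v‖ + √n * ‖dotC u z‖ + ‖dotC u v‖ := by
          refine (norm_add₃_le ..).trans_eq ?_
          rw [norm_mul, norm_mul, Complex.norm_real, Real.norm_of_nonneg (Real.sqrt_nonneg _)]
      _ ≤ √n * (d * R ^ 2) + √n * (d * R ^ 2) + d * R ^ 2 := by
          gcongr <;> exact hdot ‹_› ‹_›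
      _ ≤ 2 * d * R ^ 2 * (√n + 1) := by nlinarith [Real.sqrt_nonneg n, sq_nonneg R]
  rw [dist_comm, dist_eq_norm, cUni0_mul_conj_mul_K0, ← mul_sub_one, norm_mul, dotC_sqrt_shift]
  exact mul_le_mul (norm_ginibreKernel_le u v)
    (hbound n _ _ (normSqC_nonneg z) (hmax hp) hcross) (norm_nonneg _) (by positivity)

theorem tendsto_cUni0_mul_conj_mul_K0 (d : ℕ) {z : Fin d → ℂ} (hz : normSqC z < 1)
    (u v : Fin d → ℂ) :
    Tendsto (fun n : ℕ ↦ cUni0 d n z u * conj (cUni0 d n z v) *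
        K0 d n (fun k ↦ (√n : ℂ) * z k + u k) (fun k ↦ (√n : ℂ) * z k + v k))
      atTop (𝓝 (ginibreKernel d u v)) :=
  ((tendstoUniformlyOn_cUni0_mul_conj_mul_K0 d (K := {(z, u, v)})
    (Set.singleton_subset_iff.2 hz) isCompact_singleton).tendsto_at rfl :)

theorem stmt_17_general (d : ℕ) :
    (∀ z : Fin d → ℂ, normSqC z < 1 → ∀ u v : Fin d → ℂ,
      Tendsto
        (fun n : ℕ => cUni0 d n z u * conj (cUni0 d n z v) *
          K0 d n (fun k => (Real.sqrt n : ℂ) * z k + u k)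
            (fun k => (Real.sqrt n : ℂ) * z k + v k))
        atTop
        (nhds (((Real.pi : ℂ))⁻¹ ^ d *
          Complex.exp (dotC u v - (((normSqC u + normSqC v : ℝ)) : ℂ) / 2)))) ∧
    ∀ K : Set ((Fin d → ℂ) × (Fin d → ℂ) × (Fin d → ℂ)),
      K ⊆ {p | normSqC p.1 < 1} → IsCompact K →
        TendstoUniformlyOn
          (fun (n : ℕ) (p : (Fin d → ℂ) × (Fin d → ℂ) × (Fin d → ℂ)) =>
            cUni0 d n p.1 p.2.1 * conj (cUni0 d n p.1 p.2.2) *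
              K0 d n (fun k => (Real.sqrt n : ℂ) * p.1 k + p.2.1 k)
                (fun k => (Real.sqrt n : ℂ) * p.1 k + p.2.2 k))
          (fun p => ((Real.pi : ℂ))⁻¹ ^ d *
            Complex.exp (dotC p.2.1 p.2.2 -
              (((normSqC p.2.1 + normSqC p.2.2 : ℝ)) : ℂ) / 2))
          atTop K := by
  exact ⟨fun z hz u v ↦ tendsto_cUni0_mul_conj_mul_K0 d hz u v,
    fun K hK hKc ↦ tendstoUniformlyOn_cUni0_mul_conj_mul_K0 d hK hKc⟩

/-- Bulk scaling limit of the `τ = 0` model: the higher dimensional Ginibre kernel emerges,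
pointwise and uniformly on compact subsets of `{|z| < 1} × ℂ^d × ℂ^d`. -/
theorem stmt_17 (d : ℕ) (hd : 1 ≤ d) :
    (∀ z : Fin d → ℂ, normSqC z < 1 → ∀ u v : Fin d → ℂ,
      Tendsto
        (fun n : ℕ => cUni0 d n z u * conj (cUni0 d n z v) *
          K0 d n (fun k => (Real.sqrt n : ℂ) * z k + u k)
            (fun k => (Real.sqrt n : ℂ) * z k + v k))
        atTop
        (nhds (((Real.pi : ℂ))⁻¹ ^ d *
          Complex.exp (dotC u v - (((normSqC u + normSqC v : ℝ)) : ℂ) / 2)))) ∧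
    ∀ K : Set ((Fin d → ℂ) × (Fin d → ℂ) × (Fin d → ℂ)),
      K ⊆ {p | normSqC p.1 < 1} → IsCompact K →
        TendstoUniformlyOn
          (fun (n : ℕ) (p : (Fin d → ℂ) × (Fin d → ℂ) × (Fin d → ℂ)) =>
            cUni0 d n p.1 p.2.1 * conj (cUni0 d n p.1 p.2.2) *
              K0 d n (fun k => (Real.sqrt n : ℂ) * p.1 k + p.2.1 k)
                (fun k => (Real.sqrt n : ℂ) * p.1 k + p.2.2 k))
          (fun p => ((Real.pi : ℂ))⁻¹ ^ d *
            Complex.exp (dotC p.2.1 p.2.2 -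
              (((normSqC p.2.1 + normSqC p.2.2 : ℝ)) : ℂ) / 2))
          atTop K :=
  stmt_17_general d
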